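/- Let $f:\mathbb R\to\mathbb R$ be bounded and continuous and $\overline\lambda\ge 0$. For each $\varepsilon\in(0,1]$ let $v^{\varepsilon}:[0,1]\times\mathbb R\to\mathbb R$ be a continuous viscosity solution of $v_t+\tfrac12\big((\overline\lambda^2+\varepsilon^2)v_{xx}^+-\varepsilon^2 v_{xx}^-\big)=0$ on $[0,1)\times\mathbb R$ with $v^{\varepsilon}(1,x)=f(x)$, and assume $\sup_{\varepsilon\in(0,1]}\|v^{\varepsilon}\|_{\infty}<\infty$. Define the lower half-relaxed limit $\underline v(t,x)=\liminf_{(s,y)\to(t,x),\,\varepsilon\to0}v^{\varepsilon}(s,y)$ on $Q=[0,1]\times\mathbb R$. Then $\underline v$ is a bounded lower semicontinuous viscosity supersolution of $v_t+\tfrac12\overline\lambda^2 v_{xx}^+=0$ on $[0,1)\times\mathbb R$, and moreover $\underline v(1,x)=f(x)$ for every $x\in\mathbb R$. -/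

import Mathlib

open Filter

/-- The parabolic cylinder `Q = [0,1] × ℝ`. -/
def QQ : Set (ℝ × ℝ) := Set.Icc (0:ℝ) 1 ×ˢ Set.univ

/-- The Hamiltonian `s ↦ ½((λ̄² + ε²) s⁺ - ε² s⁻)` of the perturbed `G`-heat equation. -/
noncomputable def Geps (lb ε : ℝ) (t : ℝ) : ℝ :=
  (1 / 2) * ((lb ^ 2 + ε ^ 2) * max t 0 - ε ^ 2 * max (-t) 0)

/-- The Hamiltonian `s ↦ ½ λ̄² s⁺` of the limit equation. -/
noncomputable def Glim (lb : ℝ) (t : ℝ) : ℝ := (1 / 2) * (lb ^ 2 * max t 0)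

/-- Viscosity subsolution of `v_t + G(v_xx) = 0` on `Q° = [0,1) × ℝ` with terminal
datum `f`: the terminal inequality and the test-function property at strict local
maximum points of `u - φ` on `Q°`. -/
def IsViscSubsol (G : ℝ → ℝ) (f : ℝ → ℝ) (u : ℝ × ℝ → ℝ) : Prop :=
  (∀ x : ℝ, u (1, x) ≤ f x) ∧
  ∀ φ : ℝ × ℝ → ℝ, ContDiff ℝ 2 φ →
    ∀ z : ℝ × ℝ, z.1 ∈ Set.Ico (0:ℝ) 1 →
      (∃ U ∈ nhds z, ∀ w ∈ U, w.1 ∈ Set.Ico (0:ℝ) 1 → w ≠ z →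
        u w - φ w < u z - φ z) →
      -(deriv (fun t => φ (t, z.2)) z.1)
        - G (deriv (deriv fun x => φ (z.1, x)) z.2) ≤ 0

/-- Viscosity supersolution: strict local minimum points, reversed inequalities. -/
def IsViscSupersol (G : ℝ → ℝ) (f : ℝ → ℝ) (u : ℝ × ℝ → ℝ) : Prop :=
  (∀ x : ℝ, f x ≤ u (1, x)) ∧
  ∀ φ : ℝ × ℝ → ℝ, ContDiff ℝ 2 φ →
    ∀ z : ℝ × ℝ, z.1 ∈ Set.Ico (0:ℝ) 1 →
      (∃ U ∈ nhds z, ∀ w ∈ U, w.1 ∈ Set.Ico (0:ℝ) 1 → w ≠ z →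
        u z - φ z < u w - φ w) →
      0 ≤ -(deriv (fun t => φ (t, z.2)) z.1)
        - G (deriv (deriv fun x => φ (z.1, x)) z.2)

/-- Upper half-relaxed limit `v̄(z) = limsup_{(s,y) → z in Q, ε → 0⁺} v^ε(s,y)`. -/
noncomputable def upperRelaxedLimit (vE : ℝ → ℝ × ℝ → ℝ) (z : ℝ × ℝ) : ℝ :=
  Filter.limsup (fun p : ℝ × (ℝ × ℝ) => vE p.1 p.2)
    ((nhdsWithin 0 (Set.Ioc 0 1)) ×ˢ (nhdsWithin z QQ))

/-- Lower half-relaxed limit `v̲(z) = liminf_{(s,y) → z in Q, ε → 0⁺} v^ε(s,y)`. -/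
noncomputable def lowerRelaxedLimit (vE : ℝ → ℝ × ℝ → ℝ) (z : ℝ × ℝ) : ℝ :=
  Filter.liminf (fun p : ℝ × (ℝ × ℝ) => vE p.1 p.2)
    ((nhdsWithin 0 (Set.Ioc 0 1)) ×ˢ (nhdsWithin z QQ))

section S15helpers
open Filter Set Metric Topology

namespace S15


noncomputable def LL (z : ℝ × ℝ) : Filter (ℝ × (ℝ × ℝ)) :=
  (nhdsWithin 0 (Set.Ioc 0 1)) ×ˢ (nhdsWithin z QQ)

lemma QQ_closed : IsClosed QQ := isClosed_Icc.prod isClosed_univ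

lemma mem_QQ_iff {w : ℝ × ℝ} : w ∈ QQ ↔ w.1 ∈ Set.Icc (0:ℝ) 1 := by
  simp [QQ, Set.mem_prod]

lemma neBot_eps : (nhdsWithin (0:ℝ) (Set.Ioc 0 1)).NeBot := by
  rw [← mem_closure_iff_nhdsWithin_neBot, closure_Ioc (one_ne_zero (α := ℝ)).symm]
  exact ⟨le_refl 0, zero_le_one⟩

lemma neBot_LL {z : ℝ × ℝ} (hz : z ∈ QQ) : (LL z).NeBot := by
  have h1 := neBot_eps
  have h2 : (nhdsWithin z QQ).NeBot := nhdsWithin_neBot_of_mem hz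
  exact Filter.prod_neBot.mpr ⟨h1, h2⟩

lemma ev_mem (z : ℝ × ℝ) : ∀ᶠ p : ℝ × (ℝ × ℝ) in LL z, p.1 ∈ Set.Ioc (0:ℝ) 1 ∧ p.2 ∈ QQ :=
  (Filter.Eventually.prod_inl self_mem_nhdsWithin _).and
    (Filter.Eventually.prod_inr self_mem_nhdsWithin _)

lemma ev_nhds {z : ℝ × ℝ} {s : Set (ℝ × ℝ)} (hs : s ∈ nhds z) :
    ∀ᶠ p : ℝ × (ℝ × ℝ) in LL z, p.2 ∈ s :=
  Filter.Eventually.prod_inr (mem_nhdsWithin_of_mem_nhds hs) _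

lemma ev_eps {δ : ℝ} (hδ : 0 < δ) (z : ℝ × ℝ) :
    ∀ᶠ p : ℝ × (ℝ × ℝ) in LL z, p.1 < δ :=
  Filter.Eventually.prod_inl (nhdsWithin_le_nhds (Filter.Tendsto.eventually_lt_const hδ tendsto_id)) _

variable {vE : ℝ → ℝ × ℝ → ℝ} {C : ℝ}

lemma ev_abs (hC : ∀ ε ∈ Set.Ioc (0:ℝ) 1, ∀ w ∈ QQ, |vE ε w| ≤ C) (z : ℝ × ℝ) :
    ∀ᶠ p : ℝ × (ℝ × ℝ) in LL z, |vE p.1 p.2| ≤ C :=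
  (ev_mem z).mono fun p hp => hC _ hp.1 _ hp.2

lemma isBdd_ge (hC : ∀ ε ∈ Set.Ioc (0:ℝ) 1, ∀ w ∈ QQ, |vE ε w| ≤ C) (z : ℝ × ℝ) :
    (LL z).IsBoundedUnder (· ≥ ·) (fun p : ℝ × (ℝ × ℝ) => vE p.1 p.2) :=
  ⟨-C, (ev_abs hC z).mono fun p hp => (abs_le.mp hp).1⟩

lemma isBdd_le (hC : ∀ ε ∈ Set.Ioc (0:ℝ) 1, ∀ w ∈ QQ, |vE ε w| ≤ C) (z : ℝ × ℝ) :
    (LL z).IsBoundedUnder (· ≤ ·) (fun p : ℝ × (ℝ × ℝ) => vE p.1 p.2) :=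
  ⟨C, (ev_abs hC z).mono fun p hp => (abs_le.mp hp).2⟩

lemma isCobdd_ge (hC : ∀ ε ∈ Set.Ioc (0:ℝ) 1, ∀ w ∈ QQ, |vE ε w| ≤ C) {z : ℝ × ℝ}
    (hz : z ∈ QQ) :
    (LL z).IsCoboundedUnder (· ≥ ·) (fun p : ℝ × (ℝ × ℝ) => vE p.1 p.2) :=
  haveI := neBot_LL hz
  (isBdd_le hC z).isCoboundedUnder_ge




variable {vE : ℝ → ℝ × ℝ → ℝ} {C : ℝ}

lemma lrl_eq (z : ℝ × ℝ) :
    lowerRelaxedLimit vE z = Filter.liminf (fun p : ℝ × (ℝ × ℝ) => vE p.1 p.2) (LL z) := rfl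

lemma abs_lrl_le (hC : ∀ ε ∈ Set.Ioc (0:ℝ) 1, ∀ w ∈ QQ, |vE ε w| ≤ C) {z : ℝ × ℝ}
    (hz : z ∈ QQ) : |lowerRelaxedLimit vE z| ≤ C := by
  haveI := neBot_LL hz
  rw [lrl_eq, abs_le]
  constructor
  · exact le_liminf_of_le (isCobdd_ge hC hz)
      ((ev_abs hC z).mono fun p hp => (abs_le.mp hp).1)
  · exact liminf_le_of_frequently_le
      (((ev_abs hC z).mono fun p hp => (abs_le.mp hp).2).frequently) (isBdd_ge hC z)

lemma lsc_lrl (hC : ∀ ε ∈ Set.Ioc (0:ℝ) 1, ∀ w ∈ QQ, |vE ε w| ≤ C) :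
    LowerSemicontinuousOn (lowerRelaxedLimit vE) QQ := by
  intro z hz c hc
  haveI := neBot_LL hz
  set c' := (c + lowerRelaxedLimit vE z) / 2 with hc'def
  have hcc' : c < c' := by simp only [hc'def]; linarith
  have hc'l : c' < Filter.liminf (fun p : ℝ × (ℝ × ℝ) => vE p.1 p.2) (LL z) := by
    rw [← lrl_eq]; simp only [hc'def]; linarith
  have hev : ∀ᶠ p : ℝ × (ℝ × ℝ) in LL z, c' < vE p.1 p.2 :=
    eventually_lt_of_lt_liminf hc'l (isBdd_ge hC z)
  obtain ⟨S, hS, T, hT, hST⟩ := Filter.mem_prod_iff.mp hev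
  obtain ⟨U, hUo, hzU, hUT⟩ := mem_nhdsWithin.mp hT
  have hUev : ∀ᶠ w in nhdsWithin z QQ, w ∈ U ∩ QQ :=
    Filter.inter_mem (mem_nhdsWithin_of_mem_nhds (hUo.mem_nhds hzU)) self_mem_nhdsWithin
  refine hUev.mono fun w hw => ?_
  have hwQ : w ∈ QQ := hw.2
  haveI := neBot_LL hwQ
  have hev' : ∀ᶠ p : ℝ × (ℝ × ℝ) in LL w, c' ≤ vE p.1 p.2 := by
    have hT' : U ∩ QQ ∈ nhdsWithin w QQ :=
      Filter.inter_mem (mem_nhdsWithin_of_mem_nhds (hUo.mem_nhds hw.1)) self_mem_nhdsWithin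
    have := Filter.prod_mem_prod hS hT'
    exact Filter.mem_of_superset this fun p hp => show c' ≤ vE p.1 p.2 from le_of_lt (hST ⟨hp.1, hUT hp.2⟩)
  have : c' ≤ lowerRelaxedLimit vE w := by
    rw [lrl_eq]; exact le_liminf_of_le (isCobdd_ge hC hwQ) hev'
  exact lt_of_lt_of_le hcc' this

lemma lrl_le_f {f : ℝ → ℝ} (hC : ∀ ε ∈ Set.Ioc (0:ℝ) 1, ∀ w ∈ QQ, |vE ε w| ≤ C)
    (hterm : ∀ ε ∈ Set.Ioc (0:ℝ) 1, ∀ x : ℝ, vE ε (1, x) = f x) (x : ℝ) :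
    lowerRelaxedLimit vE (1, x) ≤ f x := by
  have hzQ : ((1:ℝ), x) ∈ QQ := mem_QQ_iff.mpr ⟨zero_le_one, le_refl 1⟩
  haveI := neBot_LL hzQ
  rw [lrl_eq]
  apply liminf_le_of_frequently_le _ (isBdd_ge hC _)
  rw [Filter.frequently_iff]
  intro V hV
  obtain ⟨S, hS, T, hT, hST⟩ := Filter.mem_prod_iff.mp hV
  have hS' : (S ∩ Set.Ioc 0 1).Nonempty := by
    haveI := neBot_eps
    exact Filter.nonempty_of_mem (Filter.inter_mem hS self_mem_nhdsWithin)
  obtain ⟨ε, hεS, hεI⟩ := hS'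
  have hzT : ((1:ℝ), x) ∈ T := mem_of_mem_nhdsWithin hzQ hT
  exact ⟨(ε, (1, x)), hST ⟨hεS, hzT⟩, le_of_eq (hterm ε hεI x)⟩



lemma slice1_deriv {φ : ℝ × ℝ → ℝ} (hφ : Differentiable ℝ φ) (a y : ℝ) :
    deriv (fun t => φ (t, y)) a = fderiv ℝ φ (a, y) (1, 0) := by
  have h1 : HasDerivAt (fun t : ℝ => (t, y)) ((1:ℝ), (0:ℝ)) a :=
    (hasDerivAt_id a).prodMk (hasDerivAt_const a y)
  have h2 := (hφ (a, y)).hasFDerivAt.comp_hasDerivAt a h1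
  exact h2.deriv

lemma slice2_deriv {φ : ℝ × ℝ → ℝ} (hφ : Differentiable ℝ φ) (a x : ℝ) :
    deriv (fun x => φ (a, x)) x = fderiv ℝ φ (a, x) (0, 1) := by
  have h1 : HasDerivAt (fun x : ℝ => (a, x)) ((0:ℝ), (1:ℝ)) x :=
    (hasDerivAt_const x a).prodMk (hasDerivAt_id x)
  exact ((hφ (a, x)).hasFDerivAt.comp_hasDerivAt x h1).deriv

lemma slice1_diff {φ : ℝ × ℝ → ℝ} (hφ : Differentiable ℝ φ) (a y : ℝ) :
    DifferentiableAt ℝ (fun t => φ (t, y)) a := by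
  have h1 : HasDerivAt (fun t : ℝ => (t, y)) ((1:ℝ), (0:ℝ)) a :=
    (hasDerivAt_id a).prodMk (hasDerivAt_const a y)
  exact ((hφ (a, y)).hasFDerivAt.comp_hasDerivAt a h1).differentiableAt

lemma slice2_diff {φ : ℝ × ℝ → ℝ} (hφ : Differentiable ℝ φ) (a x : ℝ) :
    DifferentiableAt ℝ (fun x => φ (a, x)) x := by
  have h1 : HasDerivAt (fun x : ℝ => (a, x)) ((0:ℝ), (1:ℝ)) x :=
    (hasDerivAt_const x a).prodMk (hasDerivAt_id x)
  exact ((hφ (a, x)).hasFDerivAt.comp_hasDerivAt x h1).differentiableAt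

/-- The second-slot partial derivative as a globally defined function. -/
noncomputable def P2 (φ : ℝ × ℝ → ℝ) : ℝ × ℝ → ℝ := fun w => fderiv ℝ φ w (0, 1)

lemma P2_contDiff {φ : ℝ × ℝ → ℝ} (hφ : ContDiff ℝ 2 φ) : ContDiff ℝ 1 (P2 φ) :=
  (hφ.fderiv_right (by norm_num)).clm_apply contDiff_const

lemma deriv_slice2_eq {φ : ℝ × ℝ → ℝ} (hφ : ContDiff ℝ 2 φ) (a : ℝ) :
    (deriv fun x => φ (a, x)) = fun x => P2 φ (a, x) := by
  funext x
  exact slice2_deriv (hφ.differentiable (by norm_num)) a x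

lemma deriv2_slice_eq {φ : ℝ × ℝ → ℝ} (hφ : ContDiff ℝ 2 φ) (a b : ℝ) :
    deriv (deriv fun x => φ (a, x)) b = fderiv ℝ (P2 φ) (a, b) (0, 1) := by
  rw [deriv_slice2_eq hφ a]
  exact slice2_deriv ((P2_contDiff hφ).differentiable one_ne_zero) a b

lemma cont_phit {φ : ℝ × ℝ → ℝ} (hφ : ContDiff ℝ 2 φ) :
    Continuous (fun w : ℝ × ℝ => deriv (fun t => φ (t, w.2)) w.1) := by
  have hd : Differentiable ℝ φ := hφ.differentiable (by norm_num)
  have he : (fun w : ℝ × ℝ => deriv (fun t => φ (t, w.2)) w.1)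
      = fun w : ℝ × ℝ => fderiv ℝ φ w (1, 0) := by
    funext w
    rw [slice1_deriv hd w.1 w.2]
  rw [he]
  exact (hφ.continuous_fderiv (by norm_num)).clm_apply continuous_const

lemma cont_phixx {φ : ℝ × ℝ → ℝ} (hφ : ContDiff ℝ 2 φ) :
    Continuous (fun w : ℝ × ℝ => deriv (deriv fun x => φ (w.1, x)) w.2) := by
  have he : (fun w : ℝ × ℝ => deriv (deriv fun x => φ (w.1, x)) w.2)
      = fun w : ℝ × ℝ => fderiv ℝ (P2 φ) w (0, 1) := by
    funext w
    rw [deriv2_slice_eq hφ w.1 w.2]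
  rw [he]
  exact (((P2_contDiff hφ).continuous_fderiv one_ne_zero).clm_apply continuous_const)

/-- The quartic penalty. -/
def quart (z₀ : ℝ × ℝ) (w : ℝ × ℝ) : ℝ := (w.1 - z₀.1) ^ 4 + (w.2 - z₀.2) ^ 4

lemma quart_contDiff (z₀ : ℝ × ℝ) : ContDiff ℝ 2 (quart z₀) := by
  unfold quart
  exact ((contDiff_fst.sub contDiff_const).pow 4).add ((contDiff_snd.sub contDiff_const).pow 4)

lemma quart_pos {z₀ w : ℝ × ℝ} (h : w ≠ z₀) : 0 < quart z₀ w := by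
  unfold quart
  have h1 : w.1 ≠ z₀.1 ∨ w.2 ≠ z₀.2 := by
    by_contra hc
    push_neg at hc
    exact h (Prod.ext hc.1 hc.2)
  rcases h1 with h1 | h1
  · have h1' : w.1 - z₀.1 ≠ 0 := sub_ne_zero.mpr h1
    have : 0 < (w.1 - z₀.1) ^ 4 := by positivity
    have h2 : 0 ≤ (w.2 - z₀.2) ^ 4 := by positivity
    linarith
  · have h1' : w.2 - z₀.2 ≠ 0 := sub_ne_zero.mpr h1
    have : 0 < (w.2 - z₀.2) ^ 4 := by positivity
    have h2 : 0 ≤ (w.1 - z₀.1) ^ 4 := by positivity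
    linarith

lemma quart_slice1_deriv (z₀ : ℝ × ℝ) :
    deriv (fun t => quart z₀ (t, z₀.2)) z₀.1 = 0 := by
  have : ∀ t : ℝ, HasDerivAt (fun t => quart z₀ (t, z₀.2)) (4 * (t - z₀.1) ^ 3) t := by
    intro t
    have h := (((hasDerivAt_id t).sub_const z₀.1).pow 4).add_const ((z₀.2 - z₀.2) ^ 4)
    simpa [quart, mul_comm] using h
  rw [(this z₀.1).deriv]
  simp

lemma quart_slice2_deriv2 (z₀ : ℝ × ℝ) :
    deriv (deriv fun x => quart z₀ (z₀.1, x)) z₀.2 = 0 := by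
  have h1 : (deriv fun x => quart z₀ (z₀.1, x)) = fun x => 4 * (x - z₀.2) ^ 3 := by
    funext x
    have h := (((hasDerivAt_id x).sub_const z₀.2).pow 4).const_add ((z₀.1 - z₀.1) ^ 4)
    have h' : HasDerivAt (fun x => quart z₀ (z₀.1, x)) (4 * (x - z₀.2) ^ 3) x := by
      simpa [quart, mul_comm] using h
    exact h'.deriv
  rw [h1]
  have h2 : HasDerivAt (fun x : ℝ => 4 * (x - z₀.2) ^ 3) (4 * (3 * (z₀.2 - z₀.2) ^ 2)) z₀.2 := by
    simpa [mul_comm, mul_assoc] using (((hasDerivAt_id z₀.2).sub_const z₀.2).pow 3).const_mul 4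
  rw [h2.deriv]
  simp

lemma quart_slice2_diff (z₀ : ℝ × ℝ) (x : ℝ) :
    DifferentiableAt ℝ (fun x => quart z₀ (z₀.1, x)) x := by
  have h := (((hasDerivAt_id x).sub_const z₀.2).pow 4).const_add ((z₀.1 - z₀.1) ^ 4)
  have h' : HasDerivAt (fun x => quart z₀ (z₀.1, x)) (4 * (x - z₀.2) ^ 3) x := by
    simpa [quart, mul_comm] using h
  exact h'.differentiableAt



lemma quart_slice1_hasDeriv (z₀ : ℝ × ℝ) (t : ℝ) :
    HasDerivAt (fun t => quart z₀ (t, z₀.2)) (4 * (t - z₀.1) ^ 3) t := by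
  have h := (((hasDerivAt_id t).sub_const z₀.1).pow 4).add_const ((z₀.2 - z₀.2) ^ 4)
  simpa [quart, mul_comm] using h

lemma quart_slice2_hasDeriv (z₀ : ℝ × ℝ) (x : ℝ) :
    HasDerivAt (fun x => quart z₀ (z₀.1, x)) (4 * (x - z₀.2) ^ 3) x := by
  have h := (((hasDerivAt_id x).sub_const z₀.2).pow 4).const_add ((z₀.1 - z₀.1) ^ 4)
  simpa [quart, mul_comm] using h

lemma local_min_test {G : ℝ → ℝ} {u : ℝ × ℝ → ℝ}
    (hclause : ∀ φ : ℝ × ℝ → ℝ, ContDiff ℝ 2 φ → ∀ z : ℝ × ℝ, z.1 ∈ Set.Ico (0:ℝ) 1 →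
      (∃ U ∈ nhds z, ∀ w ∈ U, w.1 ∈ Set.Ico (0:ℝ) 1 → w ≠ z →
        u z - φ z < u w - φ w) →
      0 ≤ -(deriv (fun t => φ (t, z.2)) z.1)
        - G (deriv (deriv fun x => φ (z.1, x)) z.2))
    (φ : ℝ × ℝ → ℝ) (hφ : ContDiff ℝ 2 φ) (z₀ : ℝ × ℝ) (hz₀ : z₀.1 ∈ Set.Ico (0:ℝ) 1)
    {ρ : ℝ} (hρ : 0 < ρ)
    (hmin : ∀ w ∈ Metric.ball z₀ ρ, w.1 ∈ Set.Ico (0:ℝ) 1 → u z₀ - φ z₀ ≤ u w - φ w) :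
    0 ≤ -(deriv (fun t => φ (t, z₀.2)) z₀.1)
      - G (deriv (deriv fun x => φ (z₀.1, x)) z₀.2) := by
  have hd : Differentiable ℝ φ := hφ.differentiable (by norm_num)
  set ψ : ℝ × ℝ → ℝ := fun w => φ w - quart z₀ w with hψdef
  have hψ : ContDiff ℝ 2 ψ := hφ.sub (quart_contDiff z₀)
  have hstrict : ∃ U ∈ nhds z₀, ∀ w ∈ U, w.1 ∈ Set.Ico (0:ℝ) 1 → w ≠ z₀ →
      u z₀ - ψ z₀ < u w - ψ w := by
    refine ⟨Metric.ball z₀ ρ, Metric.ball_mem_nhds z₀ hρ, fun w hw hw1 hne => ?_⟩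
    have h1 : u z₀ - φ z₀ ≤ u w - φ w := hmin w hw hw1
    have h2 : 0 < quart z₀ w := quart_pos hne
    have h3 : quart z₀ z₀ = 0 := by simp [quart]
    simp only [hψdef, h3, sub_zero]
    linarith
  have h := hclause ψ hψ z₀ hz₀ hstrict
  have e1 : deriv (fun t => ψ (t, z₀.2)) z₀.1 = deriv (fun t => φ (t, z₀.2)) z₀.1 := by
    have : (fun t => ψ (t, z₀.2)) = fun t => φ (t, z₀.2) - quart z₀ (t, z₀.2) := rfl
    rw [this, deriv_fun_sub (slice1_diff hd z₀.1 z₀.2)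
      (quart_slice1_hasDeriv z₀ z₀.1).differentiableAt, quart_slice1_deriv z₀, sub_zero]
  have e2 : deriv (deriv fun x => ψ (z₀.1, x)) z₀.2
      = deriv (deriv fun x => φ (z₀.1, x)) z₀.2 := by
    have hfn : (deriv fun x => ψ (z₀.1, x))
        = fun x => P2 φ (z₀.1, x) - 4 * (x - z₀.2) ^ 3 := by
      funext x
      have h0 : (fun x => ψ (z₀.1, x)) = fun x => φ (z₀.1, x) - quart z₀ (z₀.1, x) := rfl
      rw [h0, deriv_fun_sub (slice2_diff hd z₀.1 x) (quart_slice2_diff z₀ x),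
        slice2_deriv hd z₀.1 x, (quart_slice2_hasDeriv z₀ x).deriv]
      rfl
    rw [hfn]
    have hcd : HasDerivAt (fun x : ℝ => 4 * (x - z₀.2) ^ 3)
        (4 * (3 * (z₀.2 - z₀.2) ^ 2)) z₀.2 := by
      simpa [mul_comm, mul_assoc] using
        (((hasDerivAt_id z₀.2).sub_const z₀.2).pow 3).const_mul 4
    have hP2d : DifferentiableAt ℝ (fun x => P2 φ (z₀.1, x)) z₀.2 :=
      slice2_diff ((P2_contDiff hφ).differentiable one_ne_zero) z₀.1 z₀.2
    rw [deriv_fun_sub hP2d hcd.differentiableAt, hcd.deriv]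
    rw [deriv_slice2_eq hφ z₀.1]
    simp
  rw [e1, e2] at h
  exact h



lemma Geps_eq (lb ε s : ℝ) : Geps lb ε s = Glim lb s + ε ^ 2 * s / 2 := by
  unfold Geps Glim
  have h := max_zero_sub_max_neg_zero_eq_self s
  rw [show max (-s) 0 = max s 0 - s by linarith]
  ring

lemma Geps_neg2A (lb ε A : ℝ) (hA : 0 ≤ A) : Geps lb ε (-(2 * A)) = -(ε ^ 2 * A) := by
  unfold Geps
  rw [max_eq_right (by linarith : -(2 * A) ≤ 0), neg_neg,
    max_eq_left (by linarith : (0:ℝ) ≤ 2 * A)]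
  ring

lemma barrier {f : ℝ → ℝ} {lb : ℝ} {vE : ℝ → ℝ × ℝ → ℝ} {C : ℝ}
    (hC : ∀ ε ∈ Set.Ioc (0:ℝ) 1, ∀ w ∈ QQ, |vE ε w| ≤ C)
    (hcont : ∀ ε ∈ Set.Ioc (0:ℝ) 1, ContinuousOn (vE ε) QQ)
    (hsup : ∀ ε ∈ Set.Ioc (0:ℝ) 1, IsViscSupersol (Geps lb ε) f (vE ε))
    (hterm : ∀ ε ∈ Set.Ioc (0:ℝ) 1, ∀ x : ℝ, vE ε (1, x) = f x)
    (x₀ δ A R : ℝ) (hδ : 0 ≤ δ) (hA : 0 ≤ A) (hR : 1 ≤ R)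
    (hterminal : ∀ y : ℝ, f x₀ - δ - A * (y - x₀) ^ 2 ≤ f y)
    (hlateral : C + f x₀ ≤ A * R ^ 2)
    {ε : ℝ} (hε : ε ∈ Set.Ioc (0:ℝ) 1) {w : ℝ × ℝ} (hw1 : w.1 ∈ Set.Icc (0:ℝ) 1)
    (hw2 : |w.2 - x₀| ≤ R) :
    f x₀ - δ - A * (w.2 - x₀) ^ 2 - (A + 1) * (1 - w.1) ≤ vE ε w := by
  set χ : ℝ × ℝ → ℝ := fun p => f x₀ - δ - A * (p.2 - x₀) ^ 2 - (A + 1) * (1 - p.1)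
    with hχdef
  have hχ : ContDiff ℝ 2 χ := by
    apply ContDiff.sub
    · exact contDiff_const.sub (contDiff_const.mul ((contDiff_snd.sub contDiff_const).pow 2))
    · exact contDiff_const.mul (contDiff_const.sub contDiff_fst)
  set D : Set (ℝ × ℝ) := Set.Icc (0:ℝ) 1 ×ˢ Set.Icc (x₀ - R) (x₀ + R) with hDdef
  have hDc : IsCompact D := isCompact_Icc.prod isCompact_Icc
  have hDQ : D ⊆ QQ := fun p hp => mem_QQ_iff.mpr hp.1
  have hwD : w ∈ D := by
    obtain ⟨ha, hb⟩ := abs_le.mp hw2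
    exact ⟨hw1, ⟨by linarith, by linarith⟩⟩
  have hcd : ContinuousOn (fun p => vE ε p - χ p) D :=
    ((hcont ε hε).mono hDQ).sub (hχ.continuous.continuousOn)
  obtain ⟨zb, hzbD, hzbmin⟩ := hDc.exists_isMinOn ⟨w, hwD⟩ hcd
  have hmin' := isMinOn_iff.mp hzbmin
  suffices hkey : 0 ≤ vE ε zb - χ zb by
    have h := hmin' w hwD
    have : χ w = f x₀ - δ - A * (w.2 - x₀) ^ 2 - (A + 1) * (1 - w.1) := rfl
    linarith
  by_cases h1 : zb.1 = 1
  · have hzb' : zb = (1, zb.2) := Prod.ext_iff.mpr ⟨h1, rfl⟩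
    have hval : vE ε zb = f zb.2 := by rw [hzb']; exact hterm ε hε zb.2
    have hT := hterminal zb.2
    have hχv : χ zb = f x₀ - δ - A * (zb.2 - x₀) ^ 2 := by
      simp only [hχdef, h1]; ring
    linarith
  by_cases h2 : |zb.2 - x₀| = R
  · have hb := (abs_le.mp (hC ε hε zb (hDQ hzbD))).1
    have hsq : (zb.2 - x₀) ^ 2 = R ^ 2 := by rw [← sq_abs, h2]
    have ht1 : zb.1 ≤ 1 := hzbD.1.2
    have hχv : χ zb ≤ -C := by
      have : χ zb = f x₀ - δ - A * R ^ 2 - (A + 1) * (1 - zb.1) := by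
        simp only [hχdef, hsq]
      rw [this]
      nlinarith
    linarith
  · exfalso
    have hzb1 : zb.1 ∈ Set.Ico (0:ℝ) 1 := ⟨hzbD.1.1, lt_of_le_of_ne hzbD.1.2 h1⟩
    have habs : |zb.2 - x₀| < R := by
      refine lt_of_le_of_ne (abs_le.mpr ⟨?_, ?_⟩) h2
      · linarith [hzbD.2.1]
      · linarith [hzbD.2.2]
    have hρpos : 0 < R - |zb.2 - x₀| := by linarith
    have hmin2 : ∀ w' ∈ Metric.ball zb (R - |zb.2 - x₀|), w'.1 ∈ Set.Ico (0:ℝ) 1 →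
        vE ε zb - χ zb ≤ vE ε w' - χ w' := by
      intro w' hw' hw'1
      have hd2 : dist w'.2 zb.2 < R - |zb.2 - x₀| := by
        have := Metric.mem_ball.mp hw'
        rw [Prod.dist_eq] at this
        exact lt_of_le_of_lt (le_max_right _ _) this
      rw [Real.dist_eq] at hd2
      have habs2 : |w'.2 - x₀| < R := by
        calc |w'.2 - x₀| ≤ |w'.2 - zb.2| + |zb.2 - x₀| := abs_sub_le _ _ _
          _ < R := by linarith
      have hw'D : w' ∈ D := by
        obtain ⟨ha, hb⟩ := abs_le.mp habs2.le
        exact ⟨⟨hw'1.1, hw'1.2.le⟩, ⟨by linarith, by linarith⟩⟩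
      exact hmin' w' hw'D
    have h := local_min_test (hsup ε hε).2 χ hχ zb hzb1 hρpos hmin2
    have e1 : deriv (fun t => χ (t, zb.2)) zb.1 = A + 1 := by
      have h0 : HasDerivAt (fun t : ℝ => (A + 1) * (1 - t)) (-(A + 1)) zb.1 := by
        simpa using ((hasDerivAt_const zb.1 (1:ℝ)).sub (hasDerivAt_id zb.1)).const_mul (A + 1)
      have h1' := (hasDerivAt_const zb.1 (f x₀ - δ - A * (zb.2 - x₀) ^ 2)).sub h0
      have h2' : HasDerivAt (fun t => χ (t, zb.2)) (0 - -(A + 1)) zb.1 := h1'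
      rw [h2'.deriv]; ring
    have e2 : deriv (deriv fun x => χ (zb.1, x)) zb.2 = -(2 * A) := by
      have hfn : (deriv fun x => χ (zb.1, x)) = fun x => -(2 * A) * x + 2 * A * x₀ := by
        funext x
        have hq : HasDerivAt (fun x : ℝ => A * (x - x₀) ^ 2) (A * (2 * (x - x₀) ^ 1 * 1)) x :=
          (((hasDerivAt_id x).sub_const x₀).pow 2).const_mul A
        have hcc := ((hasDerivAt_const x (f x₀ - δ)).sub hq).sub_const ((A + 1) * (1 - zb.1))
        have h3 : HasDerivAt (fun x => χ (zb.1, x)) (0 - A * (2 * (x - x₀) ^ 1 * 1) - 0) x := by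
          simpa [hχdef] using hcc
        rw [h3.deriv]; ring
      rw [hfn]
      have h4 : HasDerivAt (fun x : ℝ => -(2 * A) * x + 2 * A * x₀) (-(2 * A) * 1) zb.2 :=
        ((hasDerivAt_id zb.2).const_mul (-(2 * A))).add_const (2 * A * x₀)
      rw [h4.deriv]; ring
    rw [e1, e2, Geps_neg2A lb ε A hA] at h
    obtain ⟨hε0, hε1⟩ := hε
    have hε2 : ε ^ 2 ≤ 1 := by nlinarith
    nlinarith


lemma f_le_lrl {f : ℝ → ℝ} {lb : ℝ} {vE : ℝ → ℝ × ℝ → ℝ} {C : ℝ}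
    (hfb : ∃ Cf, ∀ x, |f x| ≤ Cf) (hfc : Continuous f)
    (hC : ∀ ε ∈ Set.Ioc (0:ℝ) 1, ∀ w ∈ QQ, |vE ε w| ≤ C)
    (hcont : ∀ ε ∈ Set.Ioc (0:ℝ) 1, ContinuousOn (vE ε) QQ)
    (hsup : ∀ ε ∈ Set.Ioc (0:ℝ) 1, IsViscSupersol (Geps lb ε) f (vE ε))
    (hterm : ∀ ε ∈ Set.Ioc (0:ℝ) 1, ∀ x : ℝ, vE ε (1, x) = f x)
    (x₀ : ℝ) : f x₀ ≤ lowerRelaxedLimit vE (1, x₀) := by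
  obtain ⟨Cf, hCf⟩ := hfb
  have hzQ : ((1:ℝ), x₀) ∈ QQ := mem_QQ_iff.mpr ⟨zero_le_one, le_refl 1⟩
  haveI := neBot_LL hzQ
  have hC0 : 0 ≤ C :=
    le_trans (abs_nonneg _) (hC 1 ⟨zero_lt_one, le_refl 1⟩ (0, 0)
      (mem_QQ_iff.mpr ⟨le_refl 0, zero_le_one⟩))
  refine le_of_forall_pos_le_add fun e he => ?_
  obtain ⟨δ, hδdef⟩ : ∃ δ : ℝ, δ = e / 2 := ⟨_, rfl⟩
  have hδpos : 0 < δ := by rw [hδdef]; positivity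
  obtain ⟨η, hη, hηp⟩ := Metric.continuousAt_iff.mp hfc.continuousAt δ hδpos
  obtain ⟨A, hAdef⟩ : ∃ A : ℝ, A = (|f x₀| + Cf + 1) / η ^ 2 := ⟨_, rfl⟩
  have hCf0 : 0 ≤ Cf := le_trans (abs_nonneg _) (hCf 0)
  have hApos : 0 < A := by rw [hAdef]; positivity
  have hterminal : ∀ y : ℝ, f x₀ - δ - A * (y - x₀) ^ 2 ≤ f y := by
    intro y
    by_cases hy : |y - x₀| < η
    · have h1 : |f y - f x₀| < δ := by
        have := hηp (show dist y x₀ < η by rwa [Real.dist_eq])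
        rwa [Real.dist_eq] at this
      have h2 : 0 ≤ A * (y - x₀) ^ 2 := by positivity
      have h3 := (abs_lt.mp h1).1
      linarith
    · push_neg at hy
      have hsq : η ^ 2 ≤ (y - x₀) ^ 2 := by
        rw [← sq_abs (y - x₀)]
        exact pow_le_pow_left₀ hη.le hy 2
      have hAη : A * η ^ 2 = |f x₀| + Cf + 1 := by
        rw [hAdef]; field_simp
      have h4 : A * η ^ 2 ≤ A * (y - x₀) ^ 2 := by nlinarith
      have h5 : -Cf ≤ f y := (abs_le.mp (hCf y)).1
      have h6 : f x₀ ≤ |f x₀| := le_abs_self _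
      linarith
  obtain ⟨R, hRdef⟩ : ∃ R : ℝ, R = 1 + (C + |f x₀|) / A := ⟨_, rfl⟩
  have hRq : 0 ≤ (C + |f x₀|) / A := by positivity
  have hR : 1 ≤ R := by rw [hRdef]; linarith
  have hlateral : C + f x₀ ≤ A * R ^ 2 := by
    have hAR : A * R = A + (C + |f x₀|) := by
      rw [hRdef]; field_simp
    have hR0 : (0:ℝ) ≤ R := by linarith
    have hRR : R ≤ R ^ 2 := by nlinarith [mul_nonneg (sub_nonneg.mpr hR) hR0]
    have hR2 : A * R ≤ A * R ^ 2 := mul_le_mul_of_nonneg_left hRR hApos.le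
    have h6 : f x₀ ≤ |f x₀| := le_abs_self _
    nlinarith
  obtain ⟨σ, hσdef⟩ : ∃ σ : ℝ, σ = min 1 (δ / (2 * A + 2)) := ⟨_, rfl⟩
  have hσpos : 0 < σ := by
    rw [hσdef]; exact lt_min zero_lt_one (by positivity)
  have hσ1 : σ ≤ 1 := by rw [hσdef]; exact min_le_left _ _
  have hσδ : (2 * A + 2) * σ ≤ δ := by
    have h := min_le_right 1 (δ / (2 * A + 2))
    have h2 : (0:ℝ) < 2 * A + 2 := by positivity
    have h3 : σ ≤ δ / (2 * A + 2) := by rw [hσdef]; exact h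
    calc (2 * A + 2) * σ ≤ (2 * A + 2) * (δ / (2 * A + 2)) :=
          mul_le_mul_of_nonneg_left h3 h2.le
      _ = δ := by field_simp
  have hev : ∀ᶠ p : ℝ × (ℝ × ℝ) in LL (1, x₀), f x₀ - 2 * δ ≤ vE p.1 p.2 := by
    have h1 := ev_mem (1, x₀)
    have h2 := ev_nhds (z := ((1:ℝ), x₀)) (Metric.ball_mem_nhds _ hσpos)
    filter_upwards [h1, h2] with p hp1 hp2
    obtain ⟨hpε, hpQ⟩ := hp1
    have ht : p.2.1 ∈ Set.Icc (0:ℝ) 1 := mem_QQ_iff.mp hpQ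
    have hd : dist p.2 ((1:ℝ), x₀) < σ := Metric.mem_ball.mp hp2
    rw [Prod.dist_eq] at hd
    have hd1 : |p.2.1 - 1| < σ := by
      have := lt_of_le_of_lt (le_max_left (dist p.2.1 1) (dist p.2.2 x₀)) hd
      rwa [Real.dist_eq] at this
    have hd2 : |p.2.2 - x₀| < σ := by
      have := lt_of_le_of_lt (le_max_right (dist p.2.1 1) (dist p.2.2 x₀)) hd
      rwa [Real.dist_eq] at this
    have hbar := barrier hC hcont hsup hterm x₀ δ A R hδpos.le hApos.le hR hterminal hlateral
      hpε ht (le_trans hd2.le (le_trans hσ1 hR))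
    have hsq : (p.2.2 - x₀) ^ 2 ≤ σ := by
      nlinarith [sq_abs (p.2.2 - x₀), abs_nonneg (p.2.2 - x₀)]
    have h1t : 1 - p.2.1 ≤ σ := by
      have := (abs_lt.mp hd1).1
      linarith
    have hAσ : A * (p.2.2 - x₀) ^ 2 ≤ A * σ := by nlinarith
    have hBσ : (A + 1) * (1 - p.2.1) ≤ (A + 1) * σ := by
      have h0 : 0 < A + 1 := by linarith
      exact mul_le_mul_of_nonneg_left h1t h0.le
    nlinarith
  have hlow : f x₀ - 2 * δ ≤ lowerRelaxedLimit vE (1, x₀) := by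
    rw [lrl_eq]
    exact le_liminf_of_le (isCobdd_ge hC hzQ) hev
  rw [hδdef] at hlow
  linarith


lemma supersol_clause {f : ℝ → ℝ} {lb : ℝ} {vE : ℝ → ℝ × ℝ → ℝ} {C : ℝ}
    (hC : ∀ ε ∈ Set.Ioc (0:ℝ) 1, ∀ w ∈ QQ, |vE ε w| ≤ C)
    (hcont : ∀ ε ∈ Set.Ioc (0:ℝ) 1, ContinuousOn (vE ε) QQ)
    (hsup : ∀ ε ∈ Set.Ioc (0:ℝ) 1, IsViscSupersol (Geps lb ε) f (vE ε))
    (φ : ℝ × ℝ → ℝ) (hφ : ContDiff ℝ 2 φ) (z : ℝ × ℝ) (hz : z.1 ∈ Set.Ico (0:ℝ) 1)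
    (hstrict : ∃ U ∈ nhds z, ∀ w ∈ U, w.1 ∈ Set.Ico (0:ℝ) 1 → w ≠ z →
        lowerRelaxedLimit vE z - φ z < lowerRelaxedLimit vE w - φ w) :
    0 ≤ -(deriv (fun t => φ (t, z.2)) z.1)
      - Glim lb (deriv (deriv fun x => φ (z.1, x)) z.2) := by
  obtain ⟨U, hU, hUs⟩ := hstrict
  obtain ⟨r₀, hr₀, hball⟩ := Metric.mem_nhds_iff.mp hU
  obtain ⟨r, hrdef⟩ : ∃ r : ℝ, r = min (r₀ / 2) ((1 - z.1) / 2) := ⟨_, rfl⟩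
  have hzQ : z ∈ QQ := mem_QQ_iff.mpr ⟨hz.1, hz.2.le⟩
  haveI := neBot_LL hzQ
  have hz2 : z.1 < 1 := hz.2
  have hr : 0 < r := by
    rw [hrdef]; exact lt_min (by positivity) (by linarith)
  have hrr₀ : r < r₀ := by
    have := min_le_left (r₀ / 2) ((1 - z.1) / 2)
    rw [hrdef]; linarith
  have hrU : Metric.closedBall z r ⊆ U := fun w hw =>
    hball (Metric.mem_ball.mpr (lt_of_le_of_lt (Metric.mem_closedBall.mp hw) hrr₀))
  have hr1 : z.1 + r < 1 := by
    have := min_le_right (r₀ / 2) ((1 - z.1) / 2)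
    rw [hrdef]; rw [hrdef] at *; linarith [min_le_right (r₀ / 2) ((1 - z.1) / 2)]
  obtain ⟨K, hKdef⟩ : ∃ K : Set (ℝ × ℝ), K = Metric.closedBall z r ∩ QQ := ⟨_, rfl⟩
  have hKc : IsCompact K := by rw [hKdef]; exact (isCompact_closedBall z r).inter_right QQ_closed
  have hzK : z ∈ K := by rw [hKdef]; exact ⟨Metric.mem_closedBall_self hr.le, hzQ⟩
  have hKQ : K ⊆ QQ := by rw [hKdef]; exact Set.inter_subset_right
  have hKball : K ⊆ Metric.closedBall z r := by rw [hKdef]; exact Set.inter_subset_left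
  have hKt : ∀ w ∈ K, w.1 ∈ Set.Ico (0:ℝ) 1 := by
    intro w hw
    refine ⟨(mem_QQ_iff.mp (hKQ hw)).1, ?_⟩
    have hd : dist w z ≤ r := Metric.mem_closedBall.mp (hKball hw)
    have hd1 : dist w.1 z.1 ≤ r := le_trans (by rw [Prod.dist_eq]; exact le_max_left _ _) hd
    rw [Real.dist_eq] at hd1
    have := (abs_le.mp hd1).2
    linarith
  -- selection of good pairs
  have hsel : ∀ n : ℕ, ∃ p : ℝ × (ℝ × ℝ), p.1 ∈ Set.Ioc (0:ℝ) 1 ∧ p.1 < 1 / ((n:ℝ) + 1) ∧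
      p.2 ∈ K ∧ dist p.2 z < 1 / ((n:ℝ) + 1) ∧
      vE p.1 p.2 < lowerRelaxedLimit vE z + 1 / ((n:ℝ) + 1) := by
    intro n
    have hn : (0:ℝ) < 1 / ((n:ℝ) + 1) := by positivity
    have hfreq : ∃ᶠ p : ℝ × (ℝ × ℝ) in LL z,
        vE p.1 p.2 < lowerRelaxedLimit vE z + 1 / ((n:ℝ) + 1) :=
      frequently_lt_of_liminf_lt (isCobdd_ge hC hzQ) (by rw [← lrl_eq]; linarith)
    have hev : ∀ᶠ p : ℝ × (ℝ × ℝ) in LL z, (p.1 ∈ Set.Ioc (0:ℝ) 1 ∧ p.2 ∈ QQ) ∧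
        p.1 < 1 / ((n:ℝ) + 1) ∧ p.2 ∈ Metric.closedBall z r ∧
        p.2 ∈ Metric.ball z (1 / ((n:ℝ) + 1)) :=
      (ev_mem z).and ((ev_eps hn z).and
        ((ev_nhds (Metric.closedBall_mem_nhds z hr)).and (ev_nhds (Metric.ball_mem_nhds z hn))))
    obtain ⟨p, hp, ⟨h1, h2, h3, h4⟩⟩ := (hfreq.and_eventually hev).exists
    exact ⟨p, h1.1, h2, by rw [hKdef]; exact ⟨h3, h1.2⟩, Metric.mem_ball.mp h4, hp⟩
  choose pn hp1 hp2 hp3 hp4 hp5 using hsel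
  -- minimizers
  have hmins : ∀ n : ℕ, ∃ zmn ∈ K, IsMinOn (fun w => vE (pn n).1 w - φ w) K zmn := fun n =>
    hKc.exists_isMinOn ⟨z, hzK⟩ (((hcont _ (hp1 n)).mono hKQ).sub hφ.continuous.continuousOn)
  choose zm hzmK hzmMin using hmins
  obtain ⟨zs, hzsK, ns, hns, hzs⟩ := hKc.tendsto_subseq hzmK
  have hn_inv : Tendsto (fun n : ℕ => 1 / ((n:ℝ) + 1)) atTop (𝓝 0) :=
    tendsto_one_div_add_atTop_nhds_zero_nat
  have hεt : Tendsto (fun n => (pn n).1) atTop (𝓝 0) :=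
    tendsto_of_tendsto_of_tendsto_of_le_of_le tendsto_const_nhds hn_inv
      (fun n => (hp1 n).1.le) (fun n => (hp2 n).le)
  have hwt : Tendsto (fun n => (pn n).2) atTop (𝓝 z) :=
    tendsto_iff_dist_tendsto_zero.mpr
      (squeeze_zero (fun n => dist_nonneg) (fun n => (hp4 n).le) hn_inv)
  have hnsTop : Tendsto ns atTop atTop := hns.tendsto_atTop
  have hεs : Tendsto (fun k => (pn (ns k)).1) atTop (𝓝 0) := hεt.comp hnsTop
  have hws : Tendsto (fun k => (pn (ns k)).2) atTop (𝓝 z) := hwt.comp hnsTop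
  have hseq : Tendsto (fun k => ((pn (ns k)).1, zm (ns k))) atTop (LL zs) := by
    apply Tendsto.prodMk
    · exact tendsto_nhdsWithin_of_tendsto_nhds_of_eventually_within _ hεs
        (Eventually.of_forall fun k => hp1 (ns k))
    · exact tendsto_nhdsWithin_of_tendsto_nhds_of_eventually_within _ hzs
        (Eventually.of_forall fun k => hKQ (hzmK (ns k)))
  -- liminf comparison
  have hb_le : ∀ k : ℕ, |vE ((pn (ns k)).1) (zm (ns k))| ≤ C := fun k =>
    hC _ (hp1 (ns k)) _ (hKQ (hzmK (ns k)))
  have h1 : lowerRelaxedLimit vE zs ≤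
      liminf (fun k => vE ((pn (ns k)).1) (zm (ns k))) atTop := by
    rw [lrl_eq]
    have hcob : (map (fun k => ((pn (ns k)).1, zm (ns k))) atTop).IsCoboundedUnder (· ≥ ·)
        (fun p : ℝ × (ℝ × ℝ) => vE p.1 p.2) := by
      have hbu : IsBoundedUnder (· ≤ ·) atTop (fun k => vE ((pn (ns k)).1) (zm (ns k))) :=
        Filter.isBoundedUnder_of ⟨C, fun k => (abs_le.mp (hb_le k)).2⟩
      have := hbu.isCoboundedUnder_ge
      unfold Filter.IsCoboundedUnder at this ⊢
      rwa [Filter.map_map]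
    have hcomp := liminf_le_liminf_of_le hseq (isBdd_ge hC zs) hcob
    rwa [← Filter.liminf_comp] at hcomp
  have htend : Tendsto (fun k => lowerRelaxedLimit vE z + 1 / ((ns k : ℝ) + 1)
      - φ ((pn (ns k)).2) + φ (zm (ns k))) atTop
      (𝓝 (lowerRelaxedLimit vE z + 0 - φ z + φ zs)) :=
    ((tendsto_const_nhds.add (hn_inv.comp hnsTop)).sub
      ((hφ.continuous.tendsto z).comp hws)).add ((hφ.continuous.tendsto zs).comp hzs)
  have h2 : liminf (fun k => vE ((pn (ns k)).1) (zm (ns k))) atTop ≤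
      lowerRelaxedLimit vE z + 0 - φ z + φ zs := by
    have hup : ∀ k : ℕ, vE ((pn (ns k)).1) (zm (ns k)) ≤
        lowerRelaxedLimit vE z + 1 / ((ns k : ℝ) + 1) - φ ((pn (ns k)).2) + φ (zm (ns k)) := by
      intro k
      have hmin := isMinOn_iff.mp (hzmMin (ns k)) _ (hp3 (ns k))
      have h5 := hp5 (ns k)
      linarith
    calc liminf (fun k => vE ((pn (ns k)).1) (zm (ns k))) atTop
        ≤ liminf (fun k => lowerRelaxedLimit vE z + 1 / ((ns k : ℝ) + 1)
            - φ ((pn (ns k)).2) + φ (zm (ns k))) atTop :=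
          liminf_le_liminf (Eventually.of_forall hup)
            (Filter.isBoundedUnder_of ⟨-C, fun k => (abs_le.mp (hb_le k)).1⟩)
            htend.isBoundedUnder_le.isCoboundedUnder_ge
      _ = _ := htend.liminf_eq
  have hzs_eq : zs = z := by
    by_contra hne
    have := hUs zs (hrU (hKball hzsK)) (hKt zs hzsK) hne
    linarith
  rw [hzs_eq] at hzs
  have hdistz : Tendsto (fun k => dist (zm (ns k)) z) atTop (𝓝 0) :=
    tendsto_iff_dist_tendsto_zero.mp hzs
  have hevk : ∀ᶠ k in atTop, dist (zm (ns k)) z < r := hdistz.eventually_lt_const hr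
  have hPDE : ∀ᶠ k in atTop, 0 ≤ -(deriv (fun t => φ (t, (zm (ns k)).2)) (zm (ns k)).1)
      - Geps lb ((pn (ns k)).1)
        (deriv (deriv fun x => φ ((zm (ns k)).1, x)) (zm (ns k)).2) := by
    filter_upwards [hevk] with k hk
    apply local_min_test (hsup _ (hp1 (ns k))).2 φ hφ (zm (ns k)) (hKt _ (hzmK (ns k)))
      (show 0 < r - dist (zm (ns k)) z by linarith)
    intro w hw hw1
    have hwK : w ∈ K := by
      rw [hKdef]
      constructor
      · have h6 := dist_triangle w (zm (ns k)) z
        have h7 := Metric.mem_ball.mp hw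
        exact Metric.mem_closedBall.mpr (by linarith)
      · exact mem_QQ_iff.mpr ⟨hw1.1, hw1.2.le⟩
    exact isMinOn_iff.mp (hzmMin (ns k)) w hwK
  have hs : Tendsto (fun k => deriv (deriv fun x => φ ((zm (ns k)).1, x)) (zm (ns k)).2)
      atTop (𝓝 (deriv (deriv fun x => φ (z.1, x)) z.2)) :=
    ((cont_phixx hφ).tendsto z).comp hzs
  have hGlim_cont : Continuous (Glim lb) := by
    unfold Glim
    exact continuous_const.mul (continuous_const.mul (continuous_id.max continuous_const))
  have hGeps : Tendsto (fun k => Geps lb ((pn (ns k)).1)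
      (deriv (deriv fun x => φ ((zm (ns k)).1, x)) (zm (ns k)).2)) atTop
      (𝓝 (Glim lb (deriv (deriv fun x => φ (z.1, x)) z.2))) := by
    simp only [Geps_eq]
    have hA : Tendsto (fun k => Glim lb
        (deriv (deriv fun x => φ ((zm (ns k)).1, x)) (zm (ns k)).2)) atTop
        (𝓝 (Glim lb (deriv (deriv fun x => φ (z.1, x)) z.2))) :=
      (hGlim_cont.tendsto _).comp hs
    have hB : Tendsto (fun k => ((pn (ns k)).1) ^ 2 *
        (deriv (deriv fun x => φ ((zm (ns k)).1, x)) (zm (ns k)).2) / 2) atTop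
        (𝓝 ((0:ℝ) ^ 2 * (deriv (deriv fun x => φ (z.1, x)) z.2) / 2)) :=
      ((hεs.pow 2).mul hs).div_const 2
    have := hA.add hB
    simpa using this
  have hT : Tendsto (fun k => -(deriv (fun t => φ (t, (zm (ns k)).2)) (zm (ns k)).1)
      - Geps lb ((pn (ns k)).1)
        (deriv (deriv fun x => φ ((zm (ns k)).1, x)) (zm (ns k)).2)) atTop
      (𝓝 (-(deriv (fun t => φ (t, z.2)) z.1)
        - Glim lb (deriv (deriv fun x => φ (z.1, x)) z.2))) :=
    (Tendsto.neg (((cont_phit hφ).tendsto z).comp hzs)).sub hGeps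
  exact ge_of_tendsto hT hPDE


end S15

end S15helpers

/-- If for each `ε ∈ (0,1]` the function `v^ε` is a continuous,
uniformly bounded viscosity solution of
`v_t + ½((λ̄² + ε²) v_xx⁺ - ε² v_xx⁻) = 0` on `[0,1) × ℝ` with `v^ε(1,·) = f`,
then the lower half-relaxed limit `v̲` is a bounded lower semicontinuous viscosity
supersolution of `v_t + ½ λ̄² v_xx⁺ = 0` with terminal datum `f`, and `v̲(1,x) = f(x)`. -/



theorem stmt_15 (f : ℝ → ℝ) (hfb : ∃ C, ∀ x, |f x| ≤ C) (hfc : Continuous f)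
    (lb : ℝ) (hlb : 0 ≤ lb)
    (vE : ℝ → ℝ × ℝ → ℝ)
    (hcont : ∀ ε ∈ Set.Ioc (0:ℝ) 1, ContinuousOn (vE ε) QQ)
    (hbd : ∃ C, ∀ ε ∈ Set.Ioc (0:ℝ) 1, ∀ z ∈ QQ, |vE ε z| ≤ C)
    (hsub : ∀ ε ∈ Set.Ioc (0:ℝ) 1, IsViscSubsol (Geps lb ε) f (vE ε))
    (hsup : ∀ ε ∈ Set.Ioc (0:ℝ) 1, IsViscSupersol (Geps lb ε) f (vE ε))
    (hterm : ∀ ε ∈ Set.Ioc (0:ℝ) 1, ∀ x : ℝ, vE ε (1, x) = f x) :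
    (∃ C, ∀ z ∈ QQ, |lowerRelaxedLimit vE z| ≤ C) ∧
    LowerSemicontinuousOn (lowerRelaxedLimit vE) QQ ∧
    IsViscSupersol (Glim lb) f (lowerRelaxedLimit vE) ∧
    (∀ x : ℝ, lowerRelaxedLimit vE (1, x) = f x) := by
  obtain ⟨C, hC⟩ := hbd
  refine ⟨⟨C, fun z hz => S15.abs_lrl_le hC hz⟩, S15.lsc_lrl hC, ⟨?_, ?_⟩, ?_⟩
  · exact fun x => S15.f_le_lrl hfb hfc hC hcont hsup hterm x
  · intro φ hφ z hz h
    exact S15.supersol_clause hC hcont hsup φ hφ z hz h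
  · intro x
    exact le_antisymm (S15.lrl_le_f hC hterm x)
      (S15.f_le_lrl hfb hfc hC hcont hsup hterm x)
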